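/- For an n-bit string v : Fin n → Bool, let val(v) = ∑_{i < n} (if v i then 2^(n−1−i) else 0) denote its numeric value with the most significant bit first. Then for all strings x, α : Fin n → Bool, the number of indices i such that x j = α j for all j < i, x i = false, and α i = true equals 1 if val(x) < val(α) and equals 0 otherwise. Hence the sum of the comparison-test leaf labels equals the 0/1 indicator of val(x) < val(α). -/

import Mathlib

/-!
Bit `i` outweighs all later bits together, `∑_{j > i} 2^(n-1-j) < 2^(n-1-i)`, so `val` is strictly
monotone for the lexicographic order on bit strings and `val x < val α` iff `x <_lex α`, i.e. iff
some index carries label 1. Two such indices cannot coexist: the strings would have to agree at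
the smaller one, where they differ.
-/

open Finset

section
variable {ι : Type*} [LinearOrder ι]

theorem subsingleton_setOf_lex_witness {β : ι → Type*} [∀ i, Preorder (β i)] (x y : ∀ i, β i) :
    {i | (∀ j < i, x j = y j) ∧ x i < y i}.Subsingleton := by
  intro i ⟨hi, hxyi⟩ k ⟨hk, hxyk⟩
  by_contra hne
  rcases lt_or_gt_of_ne hne with h | h
  · exact (hk i h ▸ hxyi).false
  · exact (hi k h ▸ hxyk).false

theorem card_filter_lex_witness [Fintype ι] {β : ι → Type*} [∀ i, LinearOrder (β i)]
    (x y : ∀ i, β i) [Decidable (toLex x < toLex y)] :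
    #{i | (∀ j < i, x j = y j) ∧ x i < y i} = if toLex x < toLex y then 1 else 0 := by
  split_ifs with hxy
  · obtain ⟨i, hi⟩ := hxy
    refine le_antisymm (card_le_one.2 fun a ha b hb => ?_) (card_pos.2 ⟨i, by simpa using hi⟩)
    exact subsingleton_setOf_lex_witness x y (by simpa using ha) (by simpa using hb)
  · exact card_eq_zero.2 (filter_eq_empty_iff.2 fun i _ hi => hxy ⟨i, hi⟩)

variable [Fintype ι] [LocallyFiniteOrderBot ι] [LocallyFiniteOrderTop ι]

theorem sum_eq_sum_Iio_add_add_sum_Ioi {M : Type*} [AddCommMonoid M] (f : ι → M) (i : ι) :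
    ∑ j, f j = ∑ j ∈ Iio i, f j + (f i + ∑ j ∈ Ioi i, f j) := by
  classical
  rw [← sum_filter_add_sum_filter_not univ (· < i), filter_gt_eq_Iio]
  simp_rw [not_lt, filter_le_eq_Ici, add_sum_Ioi_eq_sum_Ici]

theorem strictMono_sum_ite_of_sum_Ioi_lt (w : ι → ℕ) (hw : ∀ i, ∑ j ∈ Ioi i, w j < w i) :
    StrictMono fun v : Lex (ι → Bool) => ∑ i, if v i then w i else 0 := by
  rintro x y ⟨i, hprefix, hi⟩
  obtain ⟨hxi, hyi⟩ := Bool.lt_iff.1 hi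
  have htail : ∑ j ∈ Ioi i, (if x j then w j else 0) ≤ ∑ j ∈ Ioi i, w j :=
    sum_le_sum fun j _ => by split <;> simp
  dsimp only
  rw [sum_eq_sum_Iio_add_add_sum_Ioi _ i, sum_eq_sum_Iio_add_add_sum_Ioi _ i,
    sum_congr rfl fun j hj => by rw [hprefix j (mem_Iio.1 hj)]]
  simp only [hxi, hyi, Bool.false_eq_true, if_false, if_true]
  have := hw i
  omega

end

theorem Fin.sum_Ioi_two_pow_lt {n : ℕ} (i : Fin n) :
    ∑ j ∈ Ioi i, 2 ^ (n - 1 - (j : ℕ)) < 2 ^ (n - 1 - (i : ℕ)) := by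
  have hinj : Set.InjOn (fun j : Fin n => n - 1 - (j : ℕ)) (Ioi i) := by
    intro a _ b _ hab
    have := a.isLt
    have := b.isLt
    exact Fin.ext (by simp only at hab; omega)
  rw [← sum_image hinj]
  refine Nat.geomSum_lt le_rfl fun k hk => ?_
  obtain ⟨j, hj, rfl⟩ := mem_image.1 hk
  have := j.isLt
  have : i < j := Finset.mem_Ioi.1 hj
  omega

/-- With `val v = ∑ i, if v i then 2^(n-1-i) else 0` (most significant bit first),
the number of indices `i` such that all bits before `i` agree, `x i = false` and
`α i = true` equals `1` if `val x < val α` and `0` otherwise: the sum of the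
comparison-test leaf labels is the indicator of `val x < val α`. -/
theorem leaf_label_count_eq_indicator {n : ℕ} (x α : Fin n → Bool) :
    (Finset.univ.filter
        (fun i : Fin n => (∀ j : Fin n, j < i → x j = α j) ∧ x i = false ∧ α i = true)).card
      = if (∑ i : Fin n, if x i then 2 ^ (n - 1 - (i : ℕ)) else 0)
            < (∑ i : Fin n, if α i then 2 ^ (n - 1 - (i : ℕ)) else 0)
        then 1 else 0 := by
  classical
  convert card_filter_lex_witness x α using 2
  · simp only [Bool.lt_iff]
  · exact (strictMono_sum_ite_of_sum_Ioi_lt _ Fin.sum_Ioi_two_pow_lt).lt_iff_lt
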